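/- Let G be a double-magical triple-ordered graph with ω(G) = k, with partial orders ≺₁ (a ≺₁ b iff a <₁ b, a <₂ b, a <₃ b, ab ∈ E) etc. For h = 1,…,k let S_h be the set of vertices v whose longest ≺₁-chain with maximum element v has size k−h+1. Then each S_h is a ≺₁-antichain containing no clique of size h+1 in G. -/

import Mathlib

/-!
If `a ≺₁ b`, then `a` is adjacent to every neighbour `c` of `b` with `b <₁ c`: otherwise one of the
magical graphs would see `a, b, c` as an induced path with `b` below `a` in `<₂` or `<₃`.
Hence `≺₁` is a strict order, and the height `g` (size of the longest `≺₁`-chain ending at `v`)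
strictly increases along `≺₁`, so level sets are antichains. If `t` is a clique inside the level
`g = m` with `<₁`-least element `a`, and `c` is a longest chain ending at `a`, then every element
of `c` is adjacent to every element of `t`, so `c ∪ t` is a clique of size `m + #t - 1 ≤ ω(G)`.
-/

open Finset

section

variable {V : Type*}

def IsMagical (G : SimpleGraph V) (lt1 lt2 : V → V → Prop) : Prop :=
  ∀ a b c : V, lt1 a b → lt1 b c → G.Adj a b → G.Adj b c → ¬ G.Adj a c → lt2 b a ∧ lt2 b c

theorem IsMagical.adj_of_lt {G : SimpleGraph V} {lt1 lt2 : V → V → Prop} [Std.Asymm lt2]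
    (hG : IsMagical G lt1 lt2) {a b c : V} (hab₁ : lt1 a b) (hab₂ : lt2 a b) (hbc : lt1 b c)
    (hGab : G.Adj a b) (hGbc : G.Adj b c) : G.Adj a c := by
  by_contra hac
  exact asymm hab₂ (hG a b c hab₁ hbc hGab hGbc hac).1

def prec₁ (G : SimpleGraph V) (lt1 lt2 lt3 : V → V → Prop) (a b : V) : Prop :=
  lt1 a b ∧ lt2 a b ∧ lt3 a b ∧ G.Adj a b

section DoubleMagical

variable {G G1 G2 : SimpleGraph V} {lt1 lt2 lt3 : V → V → Prop}

theorem adj_of_prec₁_of_lt [Std.Asymm lt2] [Std.Asymm lt3] (hmag1 : IsMagical G1 lt1 lt2)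
    (hmag2 : IsMagical G2 lt1 lt3) (hE : ∀ u v : V, G.Adj u v ↔ G1.Adj u v ∧ G2.Adj u v) {a b c : V}
    (hab : prec₁ G lt1 lt2 lt3 a b) (hbc : lt1 b c) (hGbc : G.Adj b c) : G.Adj a c := by
  obtain ⟨h1, h2, h3, hGab⟩ := hab
  rw [hE] at hGab hGbc ⊢
  exact ⟨hmag1.adj_of_lt h1 h2 hbc hGab.1 hGbc.1, hmag2.adj_of_lt h1 h3 hbc hGab.2 hGbc.2⟩

theorem isStrictOrder_prec₁ [IsStrictOrder V lt1] [IsStrictOrder V lt2] [IsStrictOrder V lt3]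
    (hmag1 : IsMagical G1 lt1 lt2) (hmag2 : IsMagical G2 lt1 lt3)
    (hE : ∀ u v : V, G.Adj u v ↔ G1.Adj u v ∧ G2.Adj u v) :
    IsStrictOrder V (prec₁ G lt1 lt2 lt3) where
  irrefl a h := irrefl a h.1
  trans _ _ _ hab hbc :=
    ⟨_root_.trans hab.1 hbc.1, _root_.trans hab.2.1 hbc.2.1, _root_.trans hab.2.2.1 hbc.2.2.1,
      adj_of_prec₁_of_lt hmag1 hmag2 hE hab hbc.1 hbc.2.2.2⟩

end DoubleMagical

section ChainHeight

variable (r : V → V → Prop)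

def IsTopChain (s : Finset V) (v : V) : Prop :=
  v ∈ s ∧ (∀ u ∈ s, u ≠ v → r u v) ∧ IsChain r (s : Set V)

def topChainCards (v : V) : Set ℕ :=
  {n : ℕ | ∃ s : Finset V, s.card = n ∧ IsTopChain r s v}

noncomputable def chainHeight (v : V) : ℕ :=
  sSup (topChainCards r v)

variable {r}

theorem isTopChain_singleton (v : V) : IsTopChain r {v} v :=
  ⟨mem_singleton_self v, fun _ hu huv => absurd (mem_singleton.mp hu) huv, by simp⟩

theorem IsTopChain.notMem_of_rel [IsStrictOrder V r] {s : Finset V} {a b : V}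
    (hs : IsTopChain r s a) (hab : r a b) : b ∉ s := by
  intro hb
  rcases eq_or_ne b a with rfl | hba
  · exact irrefl b hab
  · exact irrefl a (_root_.trans hab (hs.2.1 b hb hba))

theorem IsTopChain.insert [DecidableEq V] [IsTrans V r] {s : Finset V} {a b : V}
    (hs : IsTopChain r s a) (hab : r a b) : IsTopChain r (insert b s) b := by
  obtain ⟨ha, hbelow, hchain⟩ := hs
  have below_b : ∀ u ∈ s, r u b := fun u hu => by
    rcases eq_or_ne u a with rfl | hua
    · exact hab
    · exact _root_.trans (hbelow u hu hua) hab
  refine ⟨mem_insert_self b s, fun u hu hub => ?_, ?_⟩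
  · exact below_b u ((mem_insert.mp hu).resolve_left hub)
  · rw [coe_insert]
    exact hchain.insert fun u hu _ => Or.inr (below_b u hu)

section Finite

variable [Fintype V]

theorem bddAbove_topChainCards (v : V) : BddAbove (topChainCards r v) :=
  ⟨Fintype.card V, by
    rintro n ⟨s, rfl, -⟩
    exact card_le_univ s⟩

theorem exists_isTopChain_card_eq_chainHeight (v : V) :
    ∃ s : Finset V, s.card = chainHeight r v ∧ IsTopChain r s v :=
  Nat.sSup_mem (s := topChainCards r v) ⟨1, {v}, card_singleton v, isTopChain_singleton v⟩
    (bddAbove_topChainCards v)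

theorem IsTopChain.card_le_chainHeight {s : Finset V} {v : V} (hs : IsTopChain r s v) :
    s.card ≤ chainHeight r v :=
  le_csSup (bddAbove_topChainCards v) ⟨s, rfl, hs⟩

theorem chainHeight_lt_of_rel [IsStrictOrder V r] {a b : V} (hab : r a b) :
    chainHeight r a < chainHeight r b := by
  classical
  obtain ⟨s, hcard, hs⟩ := exists_isTopChain_card_eq_chainHeight (r := r) a
  calc chainHeight r a < (insert b s).card := by
        rw [card_insert_of_notMem (hs.notMem_of_rel hab), hcard]; omega
    _ ≤ chainHeight r b := (hs.insert hab).card_le_chainHeight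

end Finite

end ChainHeight

section Clique

variable {G : SimpleGraph V} {lt r : V → V → Prop}

theorem IsTopChain.isClique_union [DecidableEq V] [Std.Trichotomous lt]
    (hr_adj : ∀ a b, r a b → G.Adj a b)
    (hr_lt_adj : ∀ a b c, r a b → lt b c → G.Adj b c → G.Adj a c)
    {c t : Finset V} {a : V} (hc : IsTopChain r c a) (ht : G.IsClique (t : Set V)) (ha : a ∈ t)
    (hmin : ∀ y ∈ t, ¬ lt y a) : G.IsClique ((c ∪ t : Finset V) : Set V) := by
  obtain ⟨-, hbelow, hchain⟩ := hc
  have hc_clique : G.IsClique (c : Set V) :=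
    G.isClique_iff_isChain_adj.mpr (hchain.mono_rel hr_adj)
  have cross : ∀ x ∈ c, ∀ y ∈ t, x ≠ y → G.Adj x y := by
    intro x hx y hy hxy
    rcases eq_or_ne x a with rfl | hxa
    · exact ht ha hy hxy
    rcases eq_or_ne y a with rfl | hya
    · exact hr_adj x y (hbelow x hx hxa)
    have hay : lt a y := (trichotomous_of lt a y).resolve_right (by
      rintro (rfl | hya')
      exacts [hya rfl, hmin y hy hya'])
    exact hr_lt_adj x a y (hbelow x hx hxa) hay (ht ha hy hya.symm)
  rw [coe_union, SimpleGraph.isClique_iff, Set.pairwise_union]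
  exact ⟨hc_clique, ht, fun x hx y hy hxy => ⟨cross x hx y hy hxy, (cross x hx y hy hxy).symm⟩⟩

theorem IsTopChain.inter_eq_singleton [DecidableEq V] (hr_lt : ∀ a b, r a b → lt a b)
    {c t : Finset V} {a : V} (hc : IsTopChain r c a) (ha : a ∈ t)
    (hmin : ∀ y ∈ t, ¬ lt y a) : c ∩ t = {a} := by
  ext x
  simp only [mem_inter, mem_singleton]
  refine ⟨fun ⟨hxc, hxt⟩ => ?_, fun hxa => hxa ▸ ⟨hc.1, ha⟩⟩
  by_contra hxa
  exact hmin x hxt (hr_lt x a (hc.2.1 x hxc hxa))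

theorem card_add_chainHeight_le [Fintype V] [IsStrictTotalOrder V lt]
    (hr_adj : ∀ a b, r a b → G.Adj a b) (hr_lt : ∀ a b, r a b → lt a b)
    (hr_lt_adj : ∀ a b c, r a b → lt b c → G.Adj b c → G.Adj a c)
    {k m : ℕ} (hG : G.CliqueFree (k + 1)) {t : Finset V} (ht_ne : t.Nonempty)
    (ht : G.IsClique (t : Set V)) (hlevel : ∀ v ∈ t, chainHeight r v = m) :
    t.card + m ≤ k + 1 := by
  classical
  obtain ⟨a, ha, hmin⟩ := (Finite.wellFounded_of_trans_of_irrefl lt).has_min (t : Set V) ht_ne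
  obtain ⟨c, hcard, hc⟩ := exists_isTopChain_card_eq_chainHeight (r := r) a
  have hunion_le : (c ∪ t).card ≤ k := by
    by_contra! hk
    exact hG.mono hk _ ⟨hc.isClique_union hr_adj hr_lt_adj ht ha hmin, rfl⟩
  have hcard_union := card_union_add_card_inter c t
  rw [hc.inter_eq_singleton hr_lt ha hmin, card_singleton, hcard, hlevel a ha] at hcard_union
  omega

end Clique

end

/-- In a double-magical triple-ordered graph `G` with `ω(G) = k`, with
`a ≺₁ b ↔ a <₁ b ∧ a <₂ b ∧ a <₃ b ∧ ab ∈ E(G)`, letting `S_h` be the set of vertices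
`v` whose longest `≺₁`-chain with maximum element `v` has size `k−h+1`, each `S_h`
(for `1 ≤ h ≤ k`) is a `≺₁`-antichain containing no clique of size `h+1`. -/
theorem doubleMagical_levels {V : Type*} [Fintype V] (G G1 G2 : SimpleGraph V)
    (lt1 lt2 lt3 : V → V → Prop)
    [IsStrictTotalOrder V lt1] [IsStrictTotalOrder V lt2] [IsStrictTotalOrder V lt3]
    (hmag1 : ∀ a b c : V, lt1 a b → lt1 b c → G1.Adj a b → G1.Adj b c → ¬ G1.Adj a c →
      lt2 b a ∧ lt2 b c)
    (hmag2 : ∀ a b c : V, lt1 a b → lt1 b c → G2.Adj a b → G2.Adj b c → ¬ G2.Adj a c →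
      lt3 b a ∧ lt3 b c)
    (hE : ∀ u v : V, G.Adj u v ↔ G1.Adj u v ∧ G2.Adj u v)
    (k : ℕ)
    (hω : G.CliqueFree (k + 1) ∧ ¬ G.CliqueFree k)
    (prec1 : V → V → Prop)
    (hprec1 : ∀ a b : V, prec1 a b ↔ lt1 a b ∧ lt2 a b ∧ lt3 a b ∧ G.Adj a b)
    (g : V → ℕ)
    (hg : ∀ v : V, g v = sSup {n : ℕ | ∃ s : Finset V, s.card = n ∧ v ∈ s ∧
      (∀ u ∈ s, u ≠ v → prec1 u v) ∧
      ∀ u ∈ s, ∀ w ∈ s, u ≠ w → prec1 u w ∨ prec1 w u}) :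
    ∀ h : ℕ, 1 ≤ h → h ≤ k →
      (∀ a b : V, g a = k - h + 1 → g b = k - h + 1 → ¬ prec1 a b) ∧
      (∀ s : Finset V, (∀ v ∈ s, g v = k - h + 1) → G.IsClique ↑s → s.card ≤ h) := by
  obtain rfl : prec1 = prec₁ G lt1 lt2 lt3 := by
    ext a b
    exact hprec1 a b
  obtain rfl : g = chainHeight (prec₁ G lt1 lt2 lt3) := funext hg
  have := isStrictOrder_prec₁ hmag1 hmag2 hE
  intro h _ hhk
  refine ⟨fun a b ha hb hab => (chainHeight_lt_of_rel hab).ne (ha.trans hb.symm), ?_⟩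
  intro s hlevel hs
  rcases s.eq_empty_or_nonempty with rfl | hs_ne
  · simp
  have := card_add_chainHeight_le (fun _ _ hab => hab.2.2.2) (fun _ _ hab => hab.1)
    (fun _ _ _ => adj_of_prec₁_of_lt hmag1 hmag2 hE) hω.1 hs_ne hs hlevel
  omega
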